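/- Let Γ be a finite directed graph. Every closed inverse subsemigroup of S(Γ) conjugate to a closed inverse subsemigroup of finite chain type is itself of finite chain type. Moreover, two closed inverse subsemigroups of finite chain type L = ↑{(u,u)} and K = ↑{(v,v)} are conjugate in S(Γ) if and only if they have the same root, i.e. the paths u and v have the same initial vertex. -/

import Mathlib

/-- A (finite) directed graph: vertices, edges, and source/target maps. -/
structure DGraph where
  V : Type
  E : Type
  src : E → V
  tgt : E → V

namespace DGraph

/-- The vertex reached after traversing a list of edges from a vertex. -/
def walkEnd (G : DGraph) : G.V → List G.E → G.V
  | v, [] => v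
  | _, e :: l => walkEnd G (G.tgt e) l

/-- The list of edges forms a directed walk starting at the given vertex. -/
def IsWalk (G : DGraph) : G.V → List G.E → Prop
  | _, [] => True
  | v, e :: l => G.src e = v ∧ IsWalk G (G.tgt e) l

variable (G : DGraph)

@[simp] theorem walkEnd_nil (v : G.V) : G.walkEnd v [] = v := rfl
@[simp] theorem walkEnd_cons (v : G.V) (e : G.E) (l : List G.E) :
    G.walkEnd v (e :: l) = G.walkEnd (G.tgt e) l := rfl
@[simp] theorem isWalk_nil (v : G.V) : G.IsWalk v [] := trivial
@[simp] theorem isWalk_cons (v : G.V) (e : G.E) (l : List G.E) :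
    G.IsWalk v (e :: l) ↔ G.src e = v ∧ G.IsWalk (G.tgt e) l := Iff.rfl

theorem isWalk_append (v : G.V) (l1 l2 : List G.E) :
    G.IsWalk v (l1 ++ l2) ↔ G.IsWalk v l1 ∧ G.IsWalk (G.walkEnd v l1) l2 := by
  induction l1 generalizing v with
  | nil => simp [IsWalk, walkEnd]
  | cons e l ih => simp [IsWalk, walkEnd, ih, and_assoc]

/-- A directed path in `G`: an initial vertex together with a compatible
list of edges, traversed in order (empty paths are allowed). -/
structure DPath (G : DGraph) where
  first : G.V
  edges : List G.E
  wf : G.IsWalk first edges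

namespace DPath

variable {G}

/-- The terminal vertex of a directed path. -/
def last (p : G.DPath) : G.V := G.walkEnd p.first p.edges

/-- The list of vertices lying on a directed path. -/
def vertexList (p : G.DPath) : List G.V := p.first :: p.edges.map G.tgt

/-- `q` is a suffix (terminal segment) of `p`: `p = l ⬝ q` for some edge list `l`. -/
def IsSuffixOf (q p : G.DPath) : Prop :=
  ∃ l : List G.E, p.edges = l ++ q.edges ∧ q.first = G.walkEnd p.first l

end DPath

theorem isWalk_chopAppend {u v w : G.DPath} (hs : v.IsSuffixOf u) (hvw : v.first = w.first) :
    G.IsWalk u.first (u.edges.take (u.edges.length - v.edges.length) ++ w.edges) := by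
  obtain ⟨l, hl, hfst⟩ := hs
  rw [hl]
  have hlen : (l ++ v.edges).length - v.edges.length = l.length := by simp
  rw [hlen, List.take_left, G.isWalk_append]
  have hu := u.wf
  rw [hl, G.isWalk_append] at hu
  refine ⟨hu.1, ?_⟩
  rw [← hfst, hvw]
  exact w.wf

theorem isWalk_concat {p q : G.DPath} (h : q.first = p.last) :
    G.IsWalk p.first (p.edges ++ q.edges) := by
  rw [G.isWalk_append]
  refine ⟨p.wf, ?_⟩
  show G.IsWalk p.last q.edges
  rw [← h]
  exact q.wf

/-- Concatenation of composable directed paths. -/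
def concatPath (p q : G.DPath) (h : q.first = p.last) : G.DPath :=
  ⟨p.first, p.edges ++ q.edges, G.isWalk_concat h⟩

theorem isWalk_replicate (a : G.E) (h : G.tgt a = G.src a) (m : ℕ) :
    G.IsWalk (G.src a) (List.replicate m a) := by
  induction m with
  | zero => trivial
  | succ n ih => rw [List.replicate_succ, G.isWalk_cons]; exact ⟨rfl, by rw [h]; exact ih⟩

/-- The path traversing a loop `a` exactly `m` times. -/
def loopPow (a : G.E) (h : G.tgt a = G.src a) (m : ℕ) : G.DPath :=
  ⟨G.src a, List.replicate m a, G.isWalk_replicate a h m⟩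

/-- `p` is a nonempty directed circuit. -/
def IsCircuit (p : G.DPath) : Prop := p.edges ≠ [] ∧ p.last = p.first

/-- `p` and `d` share no nontrivial common prefix (initial segment). -/
def NoCommonPrefix (p d : G.DPath) : Prop :=
  ∀ l : List G.E, l ≠ [] → l <+: p.edges → ¬ l <+: d.edges

end DGraph

/-- The underlying set of the graph inverse semigroup `S(Γ)`: pairs of directed
paths with the same initial vertex, together with a zero element. -/
inductive GIS (G : DGraph) where
  | zero : GIS G
  | pair (a b : G.DPath) (h : a.first = b.first) : GIS G

namespace GIS

open scoped Classical in
/-- The multiplication of the graph inverse semigroup: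
`(t,u)(v,w) = (t,pw)` if `u = pv`, `(pt,w)` if `v = pu`, and `0` otherwise. -/
noncomputable def mul {G : DGraph} : GIS G → GIS G → GIS G
  | .zero, _ => .zero
  | .pair _ _ _, .zero => .zero
  | .pair t u h1, .pair v w h2 =>
    if hs : v.IsSuffixOf u then
      .pair t ⟨t.first, u.edges.take (u.edges.length - v.edges.length) ++ w.edges,
        by rw [h1]; exact G.isWalk_chopAppend hs h2⟩ rfl
    else if hs' : u.IsSuffixOf v then
      .pair ⟨v.first, v.edges.take (v.edges.length - u.edges.length) ++ t.edges,
        G.isWalk_chopAppend hs' h1.symm⟩ w h2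
    else .zero

noncomputable instance {G : DGraph} : Mul (GIS G) := ⟨GIS.mul⟩

/-- The inverse: `(v,w)⁻¹ = (w,v)` and `0⁻¹ = 0`. -/
def inv {G : DGraph} : GIS G → GIS G
  | .zero => .zero
  | .pair a b h => .pair b a h.symm

/-- The natural partial order: `x ≤ y` iff `x = e * y` for some idempotent `e`. -/
def le {G : DGraph} (x y : GIS G) : Prop := ∃ e : GIS G, e * e = e ∧ x = e * y

end GIS

/-- `L` is a closed inverse subsemigroup of `S(Γ)`: a nonempty subset closed under
multiplication, inverses, and upward closed in the natural partial order. -/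
def IsCISS (G : DGraph) (L : Set (GIS G)) : Prop :=
  L.Nonempty ∧ (∀ a ∈ L, ∀ b ∈ L, a * b ∈ L) ∧ (∀ a ∈ L, a.inv ∈ L) ∧
    (∀ a ∈ L, ∀ s : GIS G, GIS.le a s → s ∈ L)

/-- The closed inverse subsemigroup `↑{(u,u)}` of (finite) chain type:
all `(q,q)` with `q` a suffix of `u`. -/
def chainSet (G : DGraph) (u : G.DPath) : Set (GIS G) :=
  {x | ∃ q : G.DPath, q.IsSuffixOf u ∧ x = GIS.pair q q rfl}

/-- The edge list of the `r`-th power of the path `p`. -/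
def powEdges {G : DGraph} (p : G.DPath) (r : ℕ) : List G.E :=
  (List.replicate r p.edges).flatten

/-- The closed inverse subsemigroup of cycle type
`L_{p,d} = {(v p^r d, v p^s d) : r,s ≥ 0, v a suffix of p} ∪ {(q,q) : q a suffix of d}`. -/
def cycleSet (G : DGraph) (p d : G.DPath) : Set (GIS G) :=
  {x | (∃ (r s : ℕ) (v a b : G.DPath) (h : a.first = b.first),
          v.IsSuffixOf p ∧ x = GIS.pair a b h ∧
          a.first = v.first ∧ a.edges = v.edges ++ powEdges p r ++ d.edges ∧
          b.first = v.first ∧ b.edges = v.edges ++ powEdges p s ++ d.edges) ∨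
       (∃ q : G.DPath, q.IsSuffixOf d ∧ x = GIS.pair q q rfl)}

/-- `L` is a chain of idempotents: all elements are idempotent and any two are
comparable in the natural partial order. -/
def IsChainOfIdem (G : DGraph) (L : Set (GIS G)) : Prop :=
  (∀ x ∈ L, x * x = x) ∧ ∀ x ∈ L, ∀ y ∈ L, GIS.le x y ∨ GIS.le y x

/-- The set of right cosets `↑(Lt)` (for `t` with `t t⁻¹ ∈ L`) of a closed inverse
subsemigroup `L`. -/
def cosets (G : DGraph) (L : Set (GIS G)) : Set (Set (GIS G)) :=
  {C | ∃ t : GIS G, t * t.inv ∈ L ∧ C = {s | ∃ x ∈ L, GIS.le (x * t) s}}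

/-- `H` and `K` are conjugate: for some `s`, `s⁻¹Hs ⊆ K` and `sKs⁻¹ ⊆ H`. -/
def Conjugate (G : DGraph) (H K : Set (GIS G)) : Prop :=
  ∃ s : GIS G, (∀ h ∈ H, s.inv * h * s ∈ K) ∧ (∀ k ∈ K, s * k * s.inv ∈ H)

/-- The set of directed paths with initial vertex `v` whose first edge (if any)
is not an edge of `w`. -/
def Npaths (G : DGraph) (v : G.V) (w : G.DPath) : Set G.DPath :=
  {t | t.first = v ∧ ∀ e, t.edges.head? = some e → e ∉ w.edges}

/-!
If `s = (a,b)` and `s x s⁻¹` is a nonzero idempotent `(q,q)`, then `x = (c,c)` is itself an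
idempotent, `a` is a suffix of `q`, and `c` is comparable with `b` in the suffix order. So if
`s⁻¹ ↑(u,u) s ⊆ M` and `s M s⁻¹ ⊆ ↑(u,u)`, writing `u = l a` gives `M ⊆ ↑(l b, l b)`, while
`s⁻¹ (u,u) s = (l b, l b) ∈ M` gives the reverse inclusion; the root of `l b` is that of `u`.
For two chains `↑(u,u)`, `↑(v,v)` the same argument yields `v = l b`. Conversely `(u,v)`
conjugates `↑(u,u)` onto `↑(v,v)` when the roots agree.

A path is determined by its edges and its terminal vertex, so every suffix statement
reduces to list algebra plus one equation between terminal vertices.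
-/

namespace DGraph

variable {G : DGraph}

theorem walkEnd_append (v : G.V) (l₁ l₂ : List G.E) :
    G.walkEnd v (l₁ ++ l₂) = G.walkEnd (G.walkEnd v l₁) l₂ := by
  induction l₁ generalizing v with
  | nil => rfl
  | cons e l ih => exact ih _

theorem eq_of_isWalk_of_walkEnd_eq {x y : G.V} {l : List G.E} (hx : G.IsWalk x l)
    (hy : G.IsWalk y l) (h : G.walkEnd x l = G.walkEnd y l) : x = y := by
  cases l with
  | nil => exact h
  | cons e l => exact hx.1.symm.trans hy.1

namespace DPath

theorem ext {p q : G.DPath} (hfirst : p.first = q.first) (hedges : p.edges = q.edges) :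
    p = q := by
  cases p; cases q; simp_all

theorem ext_of_last {p q : G.DPath} (hedges : p.edges = q.edges) (hlast : p.last = q.last) :
    p = q := by
  have hwalk : G.IsWalk q.first p.edges := hedges ▸ q.wf
  refine ext (eq_of_isWalk_of_walkEnd_eq p.wf hwalk ?_) hedges
  have hend : G.walkEnd p.first p.edges = G.walkEnd q.first q.edges := hlast
  rwa [← hedges] at hend

theorem isSuffixOf_iff {p q : G.DPath} :
    q.IsSuffixOf p ↔ q.edges <:+ p.edges ∧ q.last = p.last := by
  constructor
  · rintro ⟨l, hl, hfirst⟩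
    refine ⟨⟨l, hl.symm⟩, ?_⟩
    rw [last, last, hl, walkEnd_append, hfirst]
  · rintro ⟨⟨l, hl⟩, hlast⟩
    have hwalk := p.wf
    rw [← hl, isWalk_append] at hwalk
    refine ⟨l, hl.symm, eq_of_isWalk_of_walkEnd_eq q.wf hwalk.2 ?_⟩
    rw [← walkEnd_append, hl]
    exact hlast

theorem IsSuffixOf.refl (p : G.DPath) : p.IsSuffixOf p :=
  isSuffixOf_iff.2 ⟨List.suffix_refl _, rfl⟩

theorem IsSuffixOf.trans {p q r : G.DPath} (hpq : p.IsSuffixOf q) (hqr : q.IsSuffixOf r) :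
    p.IsSuffixOf r := by
  rw [isSuffixOf_iff] at *
  exact ⟨hpq.1.trans hqr.1, hpq.2.trans hqr.2⟩

theorem IsSuffixOf.antisymm {p q : G.DPath} (hpq : p.IsSuffixOf q) (hqp : q.IsSuffixOf p) :
    p = q := by
  rw [isSuffixOf_iff] at *
  exact ext_of_last (hpq.1.eq_of_length (Nat.le_antisymm hpq.1.length_le hqp.1.length_le))
    hpq.2

/-- The path `l b` obtained from `u = l a` by replacing its suffix `a` with `b`. -/
def replaceSuffix (u a b : G.DPath) (ha : a.IsSuffixOf u) (hab : a.first = b.first) :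
    G.DPath :=
  ⟨u.first, u.edges.take (u.edges.length - a.edges.length) ++ b.edges, isWalk_chopAppend G ha hab⟩

section replaceSuffix

variable {u a b : G.DPath} (ha : a.IsSuffixOf u) (hab : a.first = b.first)

theorem replaceSuffix_edges {l : List G.E} (hl : u.edges = l ++ a.edges) :
    (u.replaceSuffix a b ha hab).edges = l ++ b.edges := by
  simp [replaceSuffix, hl]

theorem last_replaceSuffix : (u.replaceSuffix a b ha hab).last = b.last := by
  obtain ⟨l, hl, hfirst⟩ := id ha
  rw [last, replaceSuffix_edges ha hab hl, walkEnd_append]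
  show G.walkEnd (G.walkEnd u.first l) _ = _
  rw [← hfirst, hab]
  rfl

theorem replaceSuffix_self : u.replaceSuffix a a ha rfl = u := by
  obtain ⟨l, hl, -⟩ := id ha
  exact ext rfl (by rw [replaceSuffix_edges ha rfl hl, hl])

theorem replaceSuffix_refl (hub : u.first = b.first) :
    u.replaceSuffix u b (IsSuffixOf.refl u) hub = b :=
  ext hub (replaceSuffix_edges _ hub (List.nil_append _).symm)

end replaceSuffix

end DPath

end DGraph

namespace GIS

open DGraph DPath

variable {G : DGraph}

theorem pair_congr {a b a' b' : G.DPath} {h : a.first = b.first} {h' : a'.first = b'.first}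
    (ha : a = a') (hb : b = b') : pair a b h = pair a' b' h' := by
  subst ha hb; rfl

@[simp] theorem zero_mul (x : GIS G) : (zero : GIS G) * x = zero := rfl

@[simp] theorem mul_zero (x : GIS G) : x * (zero : GIS G) = zero := by
  cases x <;> rfl

@[simp] theorem inv_pair {a b : G.DPath} (h : a.first = b.first) :
    (pair a b h).inv = pair b a h.symm := rfl

section mul

variable {t u v w : G.DPath} {h₁ : t.first = u.first} {h₂ : v.first = w.first}

theorem pair_mul_pair_of_isSuffixOf_left (hs : v.IsSuffixOf u) :
    pair t u h₁ * pair v w h₂ = pair t (u.replaceSuffix v w hs h₂) h₁ := by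
  show GIS.mul _ _ = _
  rw [GIS.mul, dif_pos hs]
  exact pair_congr rfl (DPath.ext h₁ rfl)

theorem pair_mul_pair_of_isSuffixOf_right (hs : u.IsSuffixOf v) :
    pair t u h₁ * pair v w h₂ = pair (v.replaceSuffix u t hs h₁.symm) w h₂ := by
  by_cases hvu : v.IsSuffixOf u
  · obtain rfl := hvu.antisymm hs
    rw [pair_mul_pair_of_isSuffixOf_left hvu]
    exact pair_congr (replaceSuffix_refl h₁.symm).symm (replaceSuffix_refl h₂)
  · show GIS.mul _ _ = _
    rw [GIS.mul, dif_neg hvu, dif_pos hs]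
    rfl

theorem isSuffixOf_or_of_pair_mul_pair_ne_zero (h : pair t u h₁ * pair v w h₂ ≠ zero) :
    v.IsSuffixOf u ∨ u.IsSuffixOf v := by
  by_contra hc
  apply h
  show GIS.mul _ _ = _
  rw [GIS.mul, dif_neg (hc ∘ Or.inl), dif_neg (hc ∘ Or.inr)]

/-- A nonzero product `(t,u)(v,w)` is `(α t, β w)` where `α u = β v`. -/
theorem exists_of_pair_mul_pair_eq {P Q : G.DPath} {h₃ : P.first = Q.first}
    (h : pair t u h₁ * pair v w h₂ = pair P Q h₃) :
    u.last = v.last ∧ P.last = t.last ∧ Q.last = w.last ∧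
      ∃ α β : List G.E, α ++ u.edges = β ++ v.edges ∧ P.edges = α ++ t.edges ∧
        Q.edges = β ++ w.edges := by
  have hne : pair t u h₁ * pair v w h₂ ≠ zero := fun h0 => by rw [h0] at h; cases h
  rcases isSuffixOf_or_of_pair_mul_pair_ne_zero hne with hs | hs
  · rw [pair_mul_pair_of_isSuffixOf_left hs] at h
    obtain ⟨rfl, rfl⟩ := pair.inj h
    obtain ⟨l, hl, hfirst⟩ := hs
    exact ⟨(isSuffixOf_iff.1 ⟨l, hl, hfirst⟩).2.symm, rfl, last_replaceSuffix _ _,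
      [], l, hl, rfl, replaceSuffix_edges _ _ hl⟩
  · rw [pair_mul_pair_of_isSuffixOf_right hs] at h
    obtain ⟨rfl, rfl⟩ := pair.inj h
    obtain ⟨l, hl, hfirst⟩ := hs
    exact ⟨(isSuffixOf_iff.1 ⟨l, hl, hfirst⟩).2, last_replaceSuffix _ _, rfl,
      l, [], hl.symm, replaceSuffix_edges _ _ hl, rfl⟩

end mul

theorem pair_self_mul_pair_self_of_isSuffixOf {w q : G.DPath} (hq : q.IsSuffixOf w) :
    pair w w rfl * pair q q rfl = pair w w rfl := by
  rw [pair_mul_pair_of_isSuffixOf_left hq]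
  exact pair_congr rfl (replaceSuffix_self hq)

theorem le_of_isSuffixOf {w q : G.DPath} (hq : q.IsSuffixOf w) :
    GIS.le (pair w w rfl) (pair q q rfl) :=
  ⟨pair w w rfl, pair_self_mul_pair_self_of_isSuffixOf (IsSuffixOf.refl w),
    (pair_self_mul_pair_self_of_isSuffixOf hq).symm⟩

theorem inv_mul_pair_self_mul_eq_replaceSuffix {a b u : G.DPath} (hab : a.first = b.first)
    (ha : a.IsSuffixOf u) :
    (pair a b hab).inv * pair u u rfl * pair a b hab =
      pair (u.replaceSuffix a b ha hab) (u.replaceSuffix a b ha hab) rfl := by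
  rw [inv_pair, pair_mul_pair_of_isSuffixOf_right ha]
  exact pair_mul_pair_of_isSuffixOf_left ha

theorem inv_mul_pair_self_mul_eq_of_isSuffixOf {u v q : G.DPath} (h : u.first = v.first)
    (hq : q.IsSuffixOf u) :
    (pair u v h).inv * pair q q rfl * pair u v h = pair v v rfl := by
  calc (pair u v h).inv * pair q q rfl * pair u v h = pair v u h.symm * pair u v h := by
        rw [inv_pair, pair_mul_pair_of_isSuffixOf_left hq]
        exact congrArg (· * _) (pair_congr rfl (replaceSuffix_self hq))
    _ = pair v v rfl := by
        rw [pair_mul_pair_of_isSuffixOf_left (IsSuffixOf.refl u)]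
        exact pair_congr rfl (replaceSuffix_refl h)

end GIS

open DGraph DPath GIS

theorem zero_not_mem_chainSet {G : DGraph} (u : G.DPath) : (zero : GIS G) ∉ chainSet G u := by
  rintro ⟨q, -, h⟩
  cases h

theorem pair_self_mem_chainSet_iff {G : DGraph} {u q : G.DPath} :
    pair q q rfl ∈ chainSet G u ↔ q.IsSuffixOf u := by
  constructor
  · rintro ⟨q', hq', h⟩
    rwa [(pair.inj h).1]
  · exact fun hq => ⟨q, hq, rfl⟩

theorem pair_self_mem_chainSet {G : DGraph} (u : G.DPath) : pair u u rfl ∈ chainSet G u :=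
  pair_self_mem_chainSet_iff.2 (IsSuffixOf.refl u)

theorem chainSet_subset_of_pair_self_mem {G : DGraph} {M : Set (GIS G)} (hM : IsCISS G M)
    {w : G.DPath} (hw : pair w w rfl ∈ M) : chainSet G w ⊆ M := by
  rintro _ ⟨q, hq, rfl⟩
  exact hM.2.2.2 _ hw _ (le_of_isSuffixOf hq)

theorem exists_of_mul_mul_inv_mem_chainSet {G : DGraph} {u a b : G.DPath}
    (hab : a.first = b.first) {x : GIS G}
    (h : pair a b hab * x * (pair a b hab).inv ∈ chainSet G u) :
    ∃ ha : a.IsSuffixOf u, ∃ c : G.DPath,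
      x = pair c c rfl ∧ c.IsSuffixOf (u.replaceSuffix a b ha hab) := by
  obtain ⟨q, hqu, hq⟩ := h
  rw [inv_pair] at hq
  rcases x with _ | ⟨c, e, hce⟩
  · simp at hq
  generalize hy : pair a b hab * pair c e hce = y at hq
  rcases y with _ | ⟨P, Q, hPQ⟩
  · cases hq
  obtain ⟨hbc, hPa, -, α₁, β₁, h₁, hP, hQ⟩ := exists_of_pair_mul_pair_eq hy
  obtain ⟨-, hqP, -, α₂, β₂, h₂, hqP', hqa⟩ := exists_of_pair_mul_pair_eq hq
  have hβ₂ : β₂ = α₂ ++ α₁ := List.append_cancel_right (bs := a.edges) (by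
    rw [← hqa, hqP', hP, List.append_assoc])
  obtain rfl : c = e := DPath.ext hce (List.append_cancel_left (as := α₂ ++ β₁) (by
    simp only [List.append_assoc, ← h₁, ← hQ, h₂, hβ₂]))
  have ha : a.IsSuffixOf u :=
    (isSuffixOf_iff.2 ⟨⟨β₂, hqa.symm⟩, (hqP.trans hPa).symm⟩).trans hqu
  obtain ⟨⟨m, hm⟩, -⟩ := isSuffixOf_iff.1 hqu
  refine ⟨ha, c, rfl, isSuffixOf_iff.2 ⟨⟨m ++ α₂ ++ β₁, ?_⟩, ?_⟩⟩
  · rw [replaceSuffix_edges ha hab (l := m ++ β₂) (by rw [← hm, hqa, List.append_assoc])]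
    simp only [hβ₂, List.append_assoc, h₁]
  · rw [last_replaceSuffix, hbc]

theorem exists_eq_chainSet_of_conjugate {G : DGraph} {u : G.DPath} {M : Set (GIS G)}
    (hM : IsCISS G M) (hconj : Conjugate G (chainSet G u) M) : ∃ v : G.DPath, M = chainSet G v := by
  obtain ⟨s, hHM, hMH⟩ := hconj
  obtain ⟨k, hk⟩ := hM.1
  rcases s with _ | ⟨a, b, hab⟩
  · exact absurd (hMH k hk) (zero_not_mem_chainSet u)
  obtain ⟨ha, -⟩ := exists_of_mul_mul_inv_mem_chainSet hab (hMH k hk)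
  refine ⟨u.replaceSuffix a b ha hab, Set.Subset.antisymm (fun x hx => ?_) ?_⟩
  · obtain ⟨_, c, rfl, hc⟩ := exists_of_mul_mul_inv_mem_chainSet hab (hMH x hx)
    exact pair_self_mem_chainSet_iff.2 hc
  · apply chainSet_subset_of_pair_self_mem hM
    rw [← inv_mul_pair_self_mul_eq_replaceSuffix hab ha]
    exact hHM _ (pair_self_mem_chainSet u)

theorem first_eq_of_conjugate_chainSet {G : DGraph} {u v : G.DPath}
    (hconj : Conjugate G (chainSet G u) (chainSet G v)) : u.first = v.first := by
  obtain ⟨s, hHK, hKH⟩ := hconj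
  rcases s with _ | ⟨a, b, hab⟩
  · exact absurd (hKH _ (pair_self_mem_chainSet v)) (zero_not_mem_chainSet u)
  obtain ⟨ha, c, hc, hvc⟩ := exists_of_mul_mul_inv_mem_chainSet hab
    (hKH _ (pair_self_mem_chainSet v))
  obtain rfl := (pair.inj hc).1
  have hcv := hHK _ (pair_self_mem_chainSet u)
  rw [inv_mul_pair_self_mul_eq_replaceSuffix hab ha, pair_self_mem_chainSet_iff] at hcv
  rw [hvc.antisymm hcv]
  rfl

theorem conjugate_chainSet_of_first_eq {G : DGraph} {u v : G.DPath} (h : u.first = v.first) :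
    Conjugate G (chainSet G u) (chainSet G v) := by
  refine ⟨pair u v h, ?_, ?_⟩
  · rintro _ ⟨q, hq, rfl⟩
    rw [inv_mul_pair_self_mul_eq_of_isSuffixOf h hq]
    exact pair_self_mem_chainSet v
  · rintro _ ⟨q, hq, rfl⟩
    exact inv_mul_pair_self_mul_eq_of_isSuffixOf h.symm hq ▸ pair_self_mem_chainSet u

theorem stmt_11_general (G : DGraph) :
    (∀ (u : G.DPath) (M : Set (GIS G)), IsCISS G M →
      Conjugate G (chainSet G u) M → ∃ v : G.DPath, M = chainSet G v) ∧
    (∀ u v : G.DPath,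
      Conjugate G (chainSet G u) (chainSet G v) ↔ u.first = v.first) :=
  ⟨fun _ _ hM hconj => exists_eq_chainSet_of_conjugate hM hconj,
    fun _ _ => ⟨first_eq_of_conjugate_chainSet, conjugate_chainSet_of_first_eq⟩⟩

/-- any closed inverse subsemigroup conjugate to one of finite chain
type is of finite chain type, and two finite chain type subsemigroups `↑{(u,u)}`,
`↑{(v,v)}` are conjugate iff they have the same root. -/
theorem stmt_11 (G : DGraph) [Fintype G.V] [Fintype G.E] :
    (∀ (u : G.DPath) (M : Set (GIS G)), IsCISS G M →
      Conjugate G (chainSet G u) M → ∃ v : G.DPath, M = chainSet G v) ∧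
    (∀ u v : G.DPath,
      Conjugate G (chainSet G u) (chainSet G v) ↔ u.first = v.first) :=
  stmt_11_general G
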